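/- arXiv:2201.10292 — 3 statements merged into one kernel-verified Lean document; each statement's English description precedes it below -/
import Mathlib

section
/- For every element w of W and every reduced word w̄ of w, the quiver Γ_{w̄} has a saw teeth structure: for every ordered pair of colors (c,d), the (c,d) bicolor subquiver of Γ_{w̄} has a saw teeth structure. -/
/-!
Formalization of a statement from "Cluster structures on strata of flag varieties"
(algorithmic seeds for `C_{v,w}`), following the paper's combinatorial conventions.
Words `w̄ = [i_n, …, i_1]` are encoded by a letter function `i : ℕ → I` on positions
`1, …, n` (position 1 is the rightmost letter), and the represented group element is
`s_{i_n} ⋯ s_{i_1} = cs.wordProd (posWord i n)`.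
-/

open scoped Classical

namespace PaperStmt

variable {I : Type*}

/-- A simply-laced generalized Cartan matrix: symmetric, `2` on the diagonal,
`0` or `-1` off the diagonal (types `A_n`, `D_n`, `E_n`). -/
structure IsSimplyLacedGCM (A : I → I → ℤ) : Prop where
  symm : ∀ i j, A i j = A j i
  diag : ∀ i, A i i = 2
  off_diag : ∀ i j, i ≠ j → A i j = 0 ∨ A i j = -1

/-- The Coxeter matrix `M` is the one attached to the generalized Cartan matrix `A`:
`m_{ij} = 3` when `a_{ij} = -1` and `m_{ij} = 2` when `a_{ij} = 0` (for `i ≠ j`). -/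
def CoxeterMatrixOfGCM (A : I → I → ℤ) (M : CoxeterMatrix I) : Prop :=
  ∀ i j, i ≠ j → (M i j = 3 ↔ A i j = -1) ∧ (M i j = 2 ↔ A i j = 0)

/-- The word `[i_n, …, i_1]` built from the letter function `i` (position 1 rightmost). -/
def posWord (i : ℕ → I) (n : ℕ) : List I :=
  (List.range n).reverse.map fun t => i (t + 1)

/-- `succPos n i k` is `k⁺`: the smallest position `j` with `k < j ≤ n` of the same color
as `k`, and `n + 1` if there is none. -/
noncomputable def succPos (n : ℕ) (i : ℕ → I) (k : ℕ) : ℕ :=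
  if {j | k < j ∧ j ≤ n ∧ i j = i k}.Nonempty then sInf {j | k < j ∧ j ≤ n ∧ i j = i k}
  else n + 1

/-- The arrows of the quiver `Γ_{w̄}`: a horizontal arrow `k → k⁺` whenever `k⁺ ≤ n`,
and an ordinary arrow `a → b` whenever the colors `i a` and `i b` are adjacent and
`a⁺ ≥ b⁺ > a > b`. -/
def gammaArr (n : ℕ) (A : I → I → ℤ) (i : ℕ → I) (a b : ℕ) : Prop :=
  (1 ≤ a ∧ b ≤ n ∧ b = succPos n i a) ∨
  (1 ≤ b ∧ a ≤ n ∧ A (i a) (i b) = -1 ∧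
    succPos n i b ≤ succPos n i a ∧ a < succPos n i b ∧ b < a)

/-- An ordinary arrow of `Γ_{w̄}`: an arrow between two vertices of different colors. -/
def OrdGamma (n : ℕ) (A : I → I → ℤ) (i : ℕ → I) (a b : ℕ) : Prop :=
  gammaArr n A i a b ∧ i a ≠ i b

/-- The line of color `c` of a colored quiver with vertex set `V`. -/
def Line (V : Set ℕ) (i : ℕ → I) (c : I) : Set ℕ := {k | k ∈ V ∧ i k = c}

/-- `b` is the successor of `a` on the line of color `c`: no vertex of that line lies
strictly between them. -/
def LineNext (V : Set ℕ) (i : ℕ → I) (c : I) (a b : ℕ) : Prop :=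
  a ∈ Line V i c ∧ b ∈ Line V i c ∧ a < b ∧ ∀ x ∈ Line V i c, ¬(a < x ∧ x < b)

/-- There is a chain of consecutive horizontal arrows from `a` to `b` (`a ≤ b`) passing
through all vertices of the line of color `c` between them. -/
def HChain (V : Set ℕ) (E : ℕ → ℕ → Prop) (i : ℕ → I) (c : I) (a b : ℕ) : Prop :=
  a ∈ Line V i c ∧ b ∈ Line V i c ∧ a ≤ b ∧
    ∀ x y, LineNext V i c x y → a ≤ x → y ≤ b → E x y

/-- A saw tooth of the `(c,d)` bicolor subquiver with right end `b`, left end `a` and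
summit `x`: ordinary arrows `a → x` and `x → b` with `b < a`, together with the
horizontal chain from `b` to `a`. -/
def IsTooth (V : Set ℕ) (E : ℕ → ℕ → Prop) (i : ℕ → I) (c d : I) (b a x : ℕ) : Prop :=
  b < a ∧ x ∈ Line V i d ∧ E a x ∧ E x b ∧ HChain V E i c b a

/-- An ordinary arrow of the `(c,d)` bicolor subquiver: an arrow joining a vertex of
color `c` and a vertex of color `d` of different colors (in either direction). -/
def OrdinaryCD (E : ℕ → ℕ → Prop) (i : ℕ → I) (c d : I) (u v : ℕ) : Prop :=
  E u v ∧ i u ≠ i v ∧ ((i u = c ∧ i v = d) ∨ (i u = d ∧ i v = c))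

/-- The data of a saw teeth decomposition of the `(c,d)` bicolor subquiver:
an initial horizontal chain from the least vertex of the `c`-line up to `e0`, an optional
initial barb `e0 → ib`, a sequence of `m` consecutive saw teeth from right end `e0` to left
end `e1`, an optional final barb `fb → e1` (whose source is greater than the target of the
initial barb if both exist), a final horizontal chain from `e1` to the greatest vertex of
the `c`-line, and no ordinary arrows besides the ones listed (so every remaining `d`-vertex
is isolated in the bicolor subquiver). -/
def SawTeethData (V : Set ℕ) (E : ℕ → ℕ → Prop) (i : ℕ → I) (c d : I)
    (e0 e1 m : ℕ) (a b x : ℕ → ℕ) (ib fb : Option ℕ) : Prop :=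
  (∃ mn, IsLeast (Line V i c) mn ∧ HChain V E i c mn e0) ∧
  (∃ mx, IsGreatest (Line V i c) mx ∧ HChain V E i c e1 mx) ∧
  (∀ t, 1 ≤ t → t ≤ m → IsTooth V E i c d (b t) (a t) (x t)) ∧
  (m = 0 → e1 = e0) ∧
  (1 ≤ m → b 1 = e0 ∧ a m = e1) ∧
  (∀ t, 1 ≤ t → t < m → b (t + 1) = a t) ∧
  (∀ y, ib = some y → y ∈ Line V i d ∧ E e0 y) ∧
  (∀ y, fb = some y → y ∈ Line V i d ∧ E y e1) ∧
  (∀ y z, ib = some y → fb = some z → y < z) ∧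
  (∀ u v, OrdinaryCD E i c d u v →
    (u = e0 ∧ ib = some v) ∨ (fb = some u ∧ v = e1) ∨
      ∃ t, 1 ≤ t ∧ t ≤ m ∧ ((u = a t ∧ v = x t) ∨ (u = x t ∧ v = b t)))

/-- The `(c,d)` bicolor subquiver has a saw teeth structure: either the `c`-line is empty
and there are no ordinary arrows, or there is a saw teeth decomposition. -/
def HasSawTeeth (V : Set ℕ) (E : ℕ → ℕ → Prop) (i : ℕ → I) (c d : I) : Prop :=
  (Line V i c = ∅ ∧ ∀ u v, ¬OrdinaryCD E i c d u v) ∨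
  ∃ e0 e1 m a b x ib fb, SawTeethData V E i c d e0 e1 m a b x ib fb

/-- A pure saw teeth structure: a saw teeth structure with no initial barb. -/
def HasPureSawTeeth (V : Set ℕ) (E : ℕ → ℕ → Prop) (i : ℕ → I) (c d : I) : Prop :=
  (Line V i c = ∅ ∧ ∀ u v, ¬OrdinaryCD E i c d u v) ∨
  ∃ e0 e1 m a b x fb, SawTeethData V E i c d e0 e1 m a b x none fb

/-! ### Auxiliary development -/

section Aux

variable {n : ℕ} {i : ℕ → I}

lemma succPos_le_succ (n : ℕ) (i : ℕ → I) (k : ℕ) : succPos n i k ≤ n + 1 := by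
  by_cases h : {j | k < j ∧ j ≤ n ∧ i j = i k}.Nonempty
  · rw [succPos, if_pos h]
    exact le_trans (Nat.sInf_mem h).2.1 (Nat.le_succ n)
  · rw [succPos, if_neg h]

lemma succPos_spec {k : ℕ} (h : succPos n i k ≤ n) :
    k < succPos n i k ∧ i (succPos n i k) = i k := by
  by_cases hne : {j | k < j ∧ j ≤ n ∧ i j = i k}.Nonempty
  · have hm := Nat.sInf_mem hne
    rw [succPos, if_pos hne]
    exact ⟨hm.1, hm.2.2⟩
  · rw [succPos, if_neg hne] at h; omega

lemma succPos_le' {k j : ℕ} (h1 : k < j) (h2 : j ≤ n) (h3 : i j = i k) :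
    succPos n i k ≤ j := by
  have hne : {j | k < j ∧ j ≤ n ∧ i j = i k}.Nonempty := ⟨j, h1, h2, h3⟩
  rw [succPos, if_pos hne]
  exact Nat.sInf_le ⟨h1, h2, h3⟩

lemma color_ne_of_lt_succPos {k l : ℕ} (h1 : k < l) (h2 : l < succPos n i k)
    (h3 : l ≤ n) : i l ≠ i k :=
  fun hc => absurd (succPos_le' h1 h3 hc) (by omega)

/-- Elimination form for ordinary arrows of `Γ`. -/
lemma ord_elim {A : I → I → ℤ} {u v : ℕ} (h : gammaArr n A i u v) (hne : i u ≠ i v) :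
    1 ≤ v ∧ u ≤ n ∧ v < u ∧ A (i u) (i v) = -1 ∧
      (∀ w, v < w → w < u → i w ≠ i v) ∧
      (∀ w, u < w → w ≤ n → i w = i u → ∃ z, u < z ∧ z < w ∧ i z = i v) := by
  rcases h with ⟨h1, h2, h3⟩ | ⟨h1, h2, h3, h4, h5, h6⟩
  · subst h3
    exact absurd (succPos_spec h2).2 (Ne.symm hne)
  · refine ⟨h1, h2, h6, h3, ?_, ?_⟩
    · intro w hw1 hw2
      exact color_ne_of_lt_succPos hw1 (hw2.trans h5) (by omega)
    · intro w hw1 hw2 hcw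
      have hsu : succPos n i u ≤ w := succPos_le' hw1 hw2 hcw
      have hsvn : succPos n i v ≤ n := by omega
      obtain ⟨hlt, hcol⟩ := succPos_spec hsvn
      refine ⟨succPos n i v, h5, lt_of_le_of_ne (by omega) ?_, hcol⟩
      intro e
      rw [e, hcw] at hcol
      exact hne hcol

/-- Introduction form for ordinary arrows of `Γ`. -/
lemma ord_intro {A : I → I → ℤ} {u v : ℕ} (hne : i u ≠ i v)
    (hv1 : 1 ≤ v) (hun : u ≤ n) (hvu : v < u) (hAuv : A (i u) (i v) = -1)
    (h5 : ∀ w, v < w → w < u → i w ≠ i v)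
    (h6 : ∀ w, u < w → w ≤ n → i w = i u → ∃ z, u < z ∧ z < w ∧ i z = i v) :
    gammaArr n A i u v := by
  have husv : u < succPos n i v := by
    rcases lt_or_ge u (succPos n i v) with h | h
    · exact h
    · exfalso
      have hn : succPos n i v ≤ n := le_trans h hun
      obtain ⟨hgt, hcol⟩ := succPos_spec hn
      rcases eq_or_lt_of_le h with he | hlt
      · rw [he] at hcol; exact hne hcol
      · exact h5 _ hgt hlt hcol
  have hle : succPos n i v ≤ succPos n i u := by
    rcases le_or_gt (succPos n i u) n with h | h
    · obtain ⟨hgt, hcol⟩ := succPos_spec h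
      obtain ⟨z, hz1, hz2, hz3⟩ := h6 _ hgt h hcol
      have := succPos_le' (lt_trans hvu hz1) (le_trans (le_of_lt hz2) h) hz3
      omega
    · have := succPos_le_succ n i v
      omega
  exact Or.inr ⟨hv1, hun, hAuv, hle, husv, hvu⟩

/-- The `t`-th smallest element of a finite set of naturals (`1`-indexed). -/
noncomputable def enum (s : Finset ℕ) (t : ℕ) : ℕ := (s.sort (·≤·)).getD (t - 1) 0

lemma enum_mem {s : Finset ℕ} {t : ℕ} (h1 : 1 ≤ t) (h2 : t ≤ s.card) : enum s t ∈ s := by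
  have hl : t - 1 < (s.sort (·≤·)).length := by rw [Finset.length_sort]; omega
  rw [enum, List.getD_eq_getElem _ _ hl]
  exact (Finset.mem_sort _).1 (List.getElem_mem hl)

lemma enum_lt {s : Finset ℕ} {t t' : ℕ} (h : t < t') (h2 : t' ≤ s.card) (h1 : 1 ≤ t) :
    enum s t < enum s t' := by
  have hl' : t' - 1 < (s.sort (·≤·)).length := by rw [Finset.length_sort]; omega
  have hl : t - 1 < (s.sort (·≤·)).length := by omega
  rw [enum, enum, List.getD_eq_getElem _ _ hl, List.getD_eq_getElem _ _ hl']
  exact List.pairwise_iff_getElem.1 (Finset.sortedLT_sort s).pairwise _ _ hl hl' (by omega)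

lemma enum_le {s : Finset ℕ} {t t' : ℕ} (h1 : 1 ≤ t) (h : t ≤ t') (h2 : t' ≤ s.card) :
    enum s t ≤ enum s t' := by
  rcases eq_or_lt_of_le h with rfl | hlt
  · exact le_refl _
  · exact (enum_lt hlt h2 h1).le

lemma enum_surj {s : Finset ℕ} {y : ℕ} (hy : y ∈ s) :
    ∃ t, 1 ≤ t ∧ t ≤ s.card ∧ enum s t = y := by
  have hmem : y ∈ s.sort (·≤·) := (Finset.mem_sort _).2 hy
  obtain ⟨k, hk, he⟩ := List.getElem_of_mem hmem
  have hcard : (s.sort (·≤·)).length = s.card := Finset.length_sort _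
  refine ⟨k + 1, by omega, by omega, ?_⟩
  rw [enum, Nat.add_sub_cancel, List.getD_eq_getElem _ _ hk]
  exact he

lemma enum_card {s : Finset ℕ} (hs : s.Nonempty) : enum s s.card = s.max' hs := by
  have h1 : enum s s.card ∈ s := enum_mem (Finset.card_pos.2 hs) le_rfl
  obtain ⟨t, ht1, ht2, hte⟩ := enum_surj (s.max'_mem hs)
  exact le_antisymm (s.le_max' _ h1) (hte ▸ enum_le ht1 ht2 le_rfl)

/-- The `c`-line as a finite set. -/
noncomputable def lineF (n : ℕ) (i : ℕ → I) (c : I) : Finset ℕ :=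
  (Finset.Icc 1 n).filter fun k => i k = c

lemma mem_lineF {c : I} {k : ℕ} : k ∈ lineF n i c ↔ 1 ≤ k ∧ k ≤ n ∧ i k = c := by
  simp [lineF, Finset.mem_filter, Finset.mem_Icc, and_assoc]

lemma lineF_coe {c : I} {k : ℕ} : k ∈ Line (Set.Icc 1 n) i c ↔ k ∈ lineF n i c := by
  simp [Line, mem_lineF, Set.mem_Icc, and_assoc]

/-- Any two comparable vertices of the `c`-line are joined by a horizontal chain. -/
lemma hchain_all {A : I → I → ℤ} {c : I} {u v : ℕ}
    (hu : u ∈ lineF n i c) (hv : v ∈ lineF n i c) (huv : u ≤ v) :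
    HChain (Set.Icc 1 n) (gammaArr n A i) i c u v := by
  refine ⟨lineF_coe.2 hu, lineF_coe.2 hv, huv, ?_⟩
  intro x y hxy _ _
  obtain ⟨hx, hy, hlt, hbet⟩ := hxy
  rw [lineF_coe, mem_lineF] at hx hy
  have hsy : succPos n i x ≤ y := succPos_le' hlt hy.2.1 (hy.2.2.trans hx.2.2.symm)
  have hxs : x < succPos n i x := (succPos_spec (hsy.trans hy.2.1)).1
  have hcs : i (succPos n i x) = i x := (succPos_spec (hsy.trans hy.2.1)).2
  have heq : succPos n i x = y := by
    rcases eq_or_lt_of_le hsy with h | h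
    · exact h
    · exact absurd ⟨hxs, h⟩
        (hbet _ (lineF_coe.2 (mem_lineF.2 ⟨by omega, by omega, hcs.trans hx.2.2⟩)))
  exact Or.inl ⟨hx.1, hy.2.1, heq.symm⟩

/-- The greatest position `< k` (and `≤ n`, `≥ 1`) of color `d`; `0` if there is none. -/
noncomputable def lastD (n : ℕ) (i : ℕ → I) (d : I) (k : ℕ) : ℕ :=
  Nat.findGreatest (fun e => i e = d ∧ 1 ≤ e ∧ e < k) n

lemma lastD_spec {d : I} {k e : ℕ} (he : i e = d) (he1 : 1 ≤ e) (hen : e ≤ n)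
    (hek : e < k) :
    i (lastD n i d k) = d ∧ 1 ≤ lastD n i d k ∧ lastD n i d k < k ∧
      e ≤ lastD n i d k ∧ lastD n i d k ≤ n := by
  have h1 := Nat.findGreatest_spec (P := fun e => i e = d ∧ 1 ≤ e ∧ e < k) hen
    ⟨he, he1, hek⟩
  exact ⟨h1.1, h1.2.1, h1.2.2, Nat.le_findGreatest hen ⟨he, he1, hek⟩,
    Nat.findGreatest_le n⟩

lemma lastD_greatest {d : I} {k w : ℕ} (hw : i w = d) (hw1 : 1 ≤ w) (hwn : w ≤ n)
    (hwk : w < k) : w ≤ lastD n i d k :=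
  Nat.le_findGreatest hwn ⟨hw, hw1, hwk⟩

/-- When the `c`-line is empty there is nothing to do. -/
lemma empty_sawteeth (A : I → I → ℤ) {c d : I} (hLc : ¬(lineF n i c).Nonempty) :
    HasSawTeeth (Set.Icc 1 n) (gammaArr n A i) i c d := by
  left
  constructor
  · exact Set.eq_empty_iff_forall_notMem.2 fun k hk => hLc ⟨k, lineF_coe.1 hk⟩
  · rintro u v ⟨hE, hne, hcol⟩
    obtain ⟨h1, h2, h3, -, -, -⟩ := ord_elim hE hne
    rcases hcol with ⟨hu, hv⟩ | ⟨hu, hv⟩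
    · exact hLc ⟨u, mem_lineF.2 ⟨by omega, h2, hu⟩⟩
    · exact hLc ⟨v, mem_lineF.2 ⟨h1, by omega, hv⟩⟩

/-- When the colors `c` and `d` are not adjacent there are no ordinary arrows and the
structure is a single horizontal chain. -/
lemma trivial_sawteeth (A : I → I → ℤ) (hA : IsSimplyLacedGCM A) {c d : I}
    (hAcd : A c d ≠ -1) (hLc : (lineF n i c).Nonempty) :
    HasSawTeeth (Set.Icc 1 n) (gammaArr n A i) i c d := by
  right
  refine ⟨(lineF n i c).min' hLc, (lineF n i c).min' hLc, 0, fun _ => 0, fun _ => 0,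
    fun _ => 0, none, none, ?_, ?_, ?_, ?_, ?_, ?_, ?_, ?_, ?_, ?_⟩
  · exact ⟨(lineF n i c).min' hLc,
      ⟨lineF_coe.2 ((lineF n i c).min'_mem hLc),
        fun b hb => (lineF n i c).min'_le b (lineF_coe.1 hb)⟩,
      hchain_all ((lineF n i c).min'_mem hLc) ((lineF n i c).min'_mem hLc) le_rfl⟩
  · exact ⟨(lineF n i c).max' hLc,
      ⟨lineF_coe.2 ((lineF n i c).max'_mem hLc),
        fun b hb => (lineF n i c).le_max' b (lineF_coe.1 hb)⟩,
      hchain_all ((lineF n i c).min'_mem hLc) ((lineF n i c).max'_mem hLc)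
        ((lineF n i c).min'_le _ ((lineF n i c).max'_mem hLc))⟩
  · intro t h1 h2; omega
  · intro; rfl
  · intro h; omega
  · intro t h1 h2; omega
  · intro y h; simp at h
  · intro y h; simp at h
  · intro y z h; simp at h
  · rintro u v ⟨hE, hne, hcol⟩
    exfalso
    obtain ⟨-, -, -, h4, -, -⟩ := ord_elim hE hne
    rcases hcol with ⟨hu, hv⟩ | ⟨hu, hv⟩
    · rw [hu, hv] at h4; exact hAcd h4
    · rw [hu, hv] at h4; exact hAcd ((hA.symm c d).trans h4)

/-- The main case: `c` and `d` adjacent, nonempty `c`-line. -/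
lemma main_sawteeth (A : I → I → ℤ) (hA : IsSimplyLacedGCM A) {c d : I}
    (hAcd : A c d = -1) (hLc : (lineF n i c).Nonempty) :
    HasSawTeeth (Set.Icc 1 n) (gammaArr n A i) i c d := by
  classical
  have hcd : c ≠ d := by
    intro h
    rw [h, hA.diag] at hAcd
    omega
  have hAdc : A d c = -1 := by rw [hA.symm d c]; exact hAcd
  -- the set of block-last `c`-vertices
  set S : Finset ℕ := (lineF n i c).filter
    (fun p => ∀ q ∈ lineF n i c, p < q → ∃ e ∈ lineF n i d, p < e ∧ e < q) with hS
  have hSsub : S ⊆ lineF n i c := Finset.filter_subset _ _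
  have hmaxmem : (lineF n i c).max' hLc ∈ S := by
    rw [hS, Finset.mem_filter]
    refine ⟨(lineF n i c).max'_mem hLc, ?_⟩
    intro q hq hlt
    exact absurd ((lineF n i c).le_max' q hq) (by omega)
  have hSne : S.Nonempty := ⟨_, hmaxmem⟩
  have hr1 : 1 ≤ S.card := Finset.card_pos.2 hSne
  set r := S.card with hrdef
  have hSmax : (enum S) r = (lineF n i c).max' hLc := by
    rw [hrdef, enum_card hSne]
    exact le_antisymm ((lineF n i c).le_max' _ (hSsub (S.max'_mem hSne)))
      (S.le_max' _ hmaxmem)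
  have hPmem : ∀ t, 1 ≤ t → t ≤ r → (enum S) t ∈ S := fun t h1 h2 => enum_mem h1 h2
  have hPLc : ∀ t, 1 ≤ t → t ≤ r → (enum S) t ∈ lineF n i c :=
    fun t h1 h2 => hSsub (hPmem t h1 h2)
  have hPblock : ∀ t, 1 ≤ t → t ≤ r →
      ∀ q ∈ lineF n i c, (enum S) t < q → ∃ e ∈ lineF n i d, (enum S) t < e ∧ e < q := by
    intro t h1 h2
    have := hPmem t h1 h2
    rw [hS, Finset.mem_filter] at this
    exact this.2
  have hcons : ∀ t y, 1 ≤ t → t + 1 ≤ r → y ∈ S → (enum S) t < y → y < (enum S) (t + 1) → False := by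
    intro t y h1 h2 hy hlt1 hlt2
    obtain ⟨s, hs1, hs2, rfl⟩ := enum_surj hy
    have hts : t < s := by
      by_contra h
      push_neg at h
      exact absurd (enum_le (s := S) hs1 h (by omega)) (by omega)
    have hst : s < t + 1 := by
      by_contra h
      push_neg at h
      exact absurd (enum_le (s := S) (by omega) h hs2) (by omega)
    omega
  -- no `c`-vertex can lie between `(enum S) t` and a `d`-vertex `g` with `(enum S) t < g < (enum S) (t+1)`
  have hNoMix : ∀ t, 1 ≤ t → t + 1 ≤ r → ∀ g, i g = d → 1 ≤ g → g ≤ n →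
      (enum S) t < g → g < (enum S) (t + 1) → ∀ w, i w = c → (enum S) t < w → w < g → False := by
    intro t h1 h2 g hgd hg1 hgn hgt hglt w hwc hwgt hwlt
    have hspec := lastD_spec (n := n) (i := i) hwc (by omega) (by omega) hwlt
    set Wc := lastD n i c g with hW
    have hWS : Wc ∈ S := by
      rw [hS, Finset.mem_filter]
      refine ⟨mem_lineF.2 ⟨hspec.2.1, by omega, hspec.1⟩, ?_⟩
      intro q hq hWq
      rw [mem_lineF] at hq
      have hqg : g < q := by
        rcases lt_trichotomy q g with h | h | h
        · exact absurd (lastD_greatest hq.2.2 hq.1 hq.2.1 h) (by omega)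
        · exfalso
          apply hcd
          rw [← hq.2.2, h, hgd]
        · exact h
      exact ⟨g, mem_lineF.2 ⟨hg1, hgn, hgd⟩, by omega, hqg⟩
    exact hcons t Wc h1 h2 hWS (by omega) (by omega)
  right
  refine ⟨(enum S) 1, (enum S) r, r - 1, fun t => (enum S) (t + 1), (enum S), fun t => lastD n i d ((enum S) (t + 1)),
    (if ∃ e, i e = d ∧ 1 ≤ e ∧ e ≤ n ∧ e < (enum S) 1 then some (lastD n i d ((enum S) 1)) else none),
    (if ∃ e, i e = d ∧ 1 ≤ e ∧ e ≤ n ∧ (lineF n i c).max' hLc < e then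
      some (lastD n i d (n + 1)) else none),
    ?_, ?_, ?_, ?_, ?_, ?_, ?_, ?_, ?_, ?_⟩
  · -- initial chain
    refine ⟨(lineF n i c).min' hLc,
      ⟨lineF_coe.2 ((lineF n i c).min'_mem hLc),
        fun b hb => (lineF n i c).min'_le b (lineF_coe.1 hb)⟩,
      hchain_all ((lineF n i c).min'_mem hLc) (hPLc 1 le_rfl hr1)
        ((lineF n i c).min'_le _ (hPLc 1 le_rfl hr1))⟩
  · -- final chain
    refine ⟨(lineF n i c).max' hLc,
      ⟨lineF_coe.2 ((lineF n i c).max'_mem hLc),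
        fun b hb => (lineF n i c).le_max' b (lineF_coe.1 hb)⟩,
      hchain_all (hPLc r hr1 le_rfl) ((lineF n i c).max'_mem hLc)
        ((lineF n i c).le_max' _ (hPLc r hr1 le_rfl))⟩
  · -- the teeth
    intro t h1 h2
    beta_reduce
    have h2' : t + 1 ≤ r := by omega
    have hbt := hPLc t h1 (by omega)
    have hat := hPLc (t + 1) (by omega) h2'
    rw [mem_lineF] at hbt hat
    have hblt : (enum S) t < (enum S) (t + 1) := enum_lt (by omega) h2' h1
    obtain ⟨e, heL, he1, he2⟩ := hPblock t h1 (by omega) ((enum S) (t + 1))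
      (hPLc (t + 1) (by omega) h2') hblt
    rw [mem_lineF] at heL
    have hxspec := lastD_spec (n := n) (i := i) heL.2.2 heL.1 heL.2.1 he2
    refine ⟨hblt, lineF_coe.2 (mem_lineF.2 ⟨hxspec.2.1, hxspec.2.2.2.2, hxspec.1⟩),
      ?_, ?_, ?_⟩
    · -- arrow `a t → x t`
      refine ord_intro (u := (enum S) (t + 1)) (v := lastD n i d ((enum S) (t + 1)))
        (by rw [hat.2.2, hxspec.1]; exact hcd) hxspec.2.1 hat.2.1
        hxspec.2.2.1 (by rw [hat.2.2, hxspec.1]; exact hAcd) ?_ ?_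
      · intro w hw1 hw2 hwc
        rw [hxspec.1] at hwc
        have hw3 : 1 ≤ w := by omega
        have hw4 : w ≤ n := by omega
        have hw5 := lastD_greatest hwc hw3 hw4 hw2
        omega
      · intro w hw1 hw2 hwc
        rw [hat.2.2] at hwc
        obtain ⟨e', he'L, he'1, he'2⟩ := hPblock (t + 1) (by omega) h2' w
          (mem_lineF.2 ⟨by omega, hw2, hwc⟩) hw1
        rw [mem_lineF] at he'L
        exact ⟨e', he'1, he'2, by rw [he'L.2.2, hxspec.1]⟩
    · -- arrow `x t → b t`
      have hbx : (enum S) t < lastD n i d ((enum S) (t + 1)) := by omega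
      refine ord_intro (u := lastD n i d ((enum S) (t + 1))) (v := (enum S) t)
        (by rw [hbt.2.2, hxspec.1]; exact Ne.symm hcd) hbt.1
        hxspec.2.2.2.2 hbx (by rw [hbt.2.2, hxspec.1]; exact hAdc) ?_ ?_
      · intro w hw1 hw2 hwc
        rw [hbt.2.2] at hwc
        exact hNoMix t h1 h2' _ hxspec.1 hxspec.2.1 hxspec.2.2.2.2 hbx hxspec.2.2.1
          w hwc hw1 hw2
      · intro w hw1 hw2 hwc
        rw [hxspec.1] at hwc
        rcases lt_trichotomy w ((enum S) (t + 1)) with h | h | h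
        · exact absurd (lastD_greatest hwc (by omega) hw2 h) (by omega)
        · exfalso
          apply hcd
          rw [← hat.2.2, ← h, hwc]
        · exact ⟨(enum S) (t + 1), by omega, h, by rw [hat.2.2, hbt.2.2]⟩
    · exact hchain_all (hPLc t h1 (by omega)) (hPLc (t + 1) (by omega) h2') hblt.le
  · -- `m = 0 → e1 = e0`
    intro h
    have : r = 1 := by omega
    rw [this]
  · -- `1 ≤ m → b 1 = e0 ∧ a m = e1`
    intro h
    refine ⟨rfl, ?_⟩
    beta_reduce
    congr 1
    omega
  · -- consecutive teeth
    intro t h1 h2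
    rfl
  · -- the initial barb
    intro y hy
    by_cases hcnd : ∃ e, i e = d ∧ 1 ≤ e ∧ e ≤ n ∧ e < (enum S) 1
    · rw [if_pos hcnd] at hy
      obtain ⟨e, he⟩ := hcnd
      have hspec := lastD_spec (n := n) (i := i) he.1 he.2.1 he.2.2.1 he.2.2.2
      have hy' : y = lastD n i d ((enum S) 1) := by injection hy with h; exact h.symm
      subst hy'
      have hP1 := hPLc 1 le_rfl hr1
      rw [mem_lineF] at hP1
      refine ⟨lineF_coe.2 (mem_lineF.2 ⟨hspec.2.1, by omega, hspec.1⟩), ?_⟩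
      refine ord_intro (u := (enum S) 1) (v := lastD n i d ((enum S) 1))
        (by rw [hP1.2.2, hspec.1]; exact hcd) hspec.2.1 hP1.2.1
        hspec.2.2.1 (by rw [hP1.2.2, hspec.1]; exact hAcd) ?_ ?_
      · intro w hw1 hw2 hwc
        rw [hspec.1] at hwc
        have hw3 : 1 ≤ w := by omega
        have hw4 : w ≤ n := by omega
        have hw5 := lastD_greatest hwc hw3 hw4 hw2
        omega
      · intro w hw1 hw2 hwc
        rw [hP1.2.2] at hwc
        obtain ⟨e', he'L, he'1, he'2⟩ := hPblock 1 le_rfl hr1 w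
          (mem_lineF.2 ⟨by omega, hw2, hwc⟩) hw1
        rw [mem_lineF] at he'L
        exact ⟨e', he'1, he'2, by rw [he'L.2.2, hspec.1]⟩
    · rw [if_neg hcnd] at hy
      exact absurd hy (by simp)
  · -- the final barb
    intro y hy
    by_cases hcnd : ∃ e, i e = d ∧ 1 ≤ e ∧ e ≤ n ∧ (lineF n i c).max' hLc < e
    · rw [if_pos hcnd] at hy
      obtain ⟨e, he⟩ := hcnd
      have hspec := lastD_spec (n := n) (i := i) he.1 he.2.1 he.2.2.1
        (by omega : e < n + 1)
      have hy' : y = lastD n i d (n + 1) := by injection hy with h; exact h.symm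
      subst hy'
      have hPr := hPLc r hr1 le_rfl
      rw [mem_lineF] at hPr
      have hPrlt : (enum S) r < lastD n i d (n + 1) := by
        rw [hSmax]; omega
      refine ⟨lineF_coe.2 (mem_lineF.2 ⟨hspec.2.1, hspec.2.2.2.2, hspec.1⟩), ?_⟩
      refine ord_intro (u := lastD n i d (n + 1)) (v := (enum S) r)
        (by rw [hPr.2.2, hspec.1]; exact Ne.symm hcd) hPr.1
        hspec.2.2.2.2 hPrlt (by rw [hPr.2.2, hspec.1]; exact hAdc) ?_ ?_
      · intro w hw1 hw2 hwc
        rw [hPr.2.2] at hwc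
        have : w ∈ lineF n i c := mem_lineF.2 ⟨by omega, by omega, hwc⟩
        have := (lineF n i c).le_max' w this
        rw [← hSmax] at this
        omega
      · intro w hw1 hw2 hwc
        rw [hspec.1] at hwc
        have hw3 : 1 ≤ w := by omega
        have hw4 : w < n + 1 := by omega
        have hw5 := lastD_greatest hwc hw3 hw2 hw4
        omega
    · rw [if_neg hcnd] at hy
      exact absurd hy (by simp)
  · -- initial barb before final barb
    intro y z hy hz
    by_cases hcnd : ∃ e, i e = d ∧ 1 ≤ e ∧ e ≤ n ∧ e < (enum S) 1
    · rw [if_pos hcnd] at hy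
      by_cases hcnd2 : ∃ e, i e = d ∧ 1 ≤ e ∧ e ≤ n ∧ (lineF n i c).max' hLc < e
      · rw [if_pos hcnd2] at hz
        obtain ⟨e, he⟩ := hcnd
        obtain ⟨e', he'⟩ := hcnd2
        have hspec := lastD_spec (n := n) (i := i) he.1 he.2.1 he.2.2.1 he.2.2.2
        have hspec' := lastD_spec (n := n) (i := i) he'.1 he'.2.1 he'.2.2.1
          (by omega : e' < n + 1)
        have hy' : y = lastD n i d ((enum S) 1) := by injection hy with h; exact h.symm
        have hz' : z = lastD n i d (n + 1) := by injection hz with h; exact h.symm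
        subst hy'; subst hz'
        have hP1max : (enum S) 1 ≤ (lineF n i c).max' hLc :=
          (lineF n i c).le_max' _ (hPLc 1 le_rfl hr1)
        omega
      · rw [if_neg hcnd2] at hz
        exact absurd hz (by simp)
    · rw [if_neg hcnd] at hy
      exact absurd hy (by simp)
  · -- completeness: every ordinary arrow is listed
    rintro u v ⟨hE, hne, hcol⟩
    rcases hcol with ⟨hu, hv⟩ | ⟨hu, hv⟩
    · -- `u` of color `c`, `v` of color `d`
      obtain ⟨h1, h2, h3, h4, h5, h6⟩ := ord_elim hE hne
      have huS : u ∈ S := by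
        rw [hS, Finset.mem_filter]
        refine ⟨mem_lineF.2 ⟨by omega, h2, hu⟩, ?_⟩
        intro q hq hq2
        rw [mem_lineF] at hq
        obtain ⟨z, hz1, hz2, hz3⟩ := h6 q hq2 hq.2.1 (by rw [hq.2.2, hu])
        rw [hv] at hz3
        exact ⟨z, mem_lineF.2 ⟨by omega, by omega, hz3⟩, hz1, hz2⟩
      obtain ⟨t, ht1, ht2, htP⟩ := enum_surj huS
      have hveq : lastD n i d u = v := by
        have hsp := lastD_spec (n := n) (i := i) hv h1 (by omega) h3
        rcases lt_trichotomy (lastD n i d u) v with hlt | heq | hgt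
        · omega
        · exact heq
        · exact absurd (hsp.1.trans hv.symm) (h5 _ hgt hsp.2.2.1)
      rcases eq_or_lt_of_le ht1 with h1t | h1t
      · left
        have hP1u : (enum S) 1 = u := by rw [h1t]; exact htP
        refine ⟨hP1u.symm, ?_⟩
        have hcnd : ∃ e, i e = d ∧ 1 ≤ e ∧ e ≤ n ∧ e < (enum S) 1 :=
          ⟨v, hv, h1, by omega, by omega⟩
        rw [if_pos hcnd, hP1u, hveq]
      · right; right
        refine ⟨t - 1, by omega, by omega, Or.inl ⟨?_, ?_⟩⟩
        · beta_reduce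
          rw [show t - 1 + 1 = t by omega]
          exact htP.symm
        · beta_reduce
          rw [show t - 1 + 1 = t by omega, htP, hveq]
    · -- `u` of color `d`, `v` of color `c`
      obtain ⟨h1, h2, h3, h4, h5, h6⟩ := ord_elim hE hne
      have hvLc : v ∈ lineF n i c := mem_lineF.2 ⟨h1, by omega, hv⟩
      have hvS : v ∈ S := by
        rw [hS, Finset.mem_filter]
        refine ⟨hvLc, ?_⟩
        intro q hq hq2
        rw [mem_lineF] at hq
        have hqu : u < q := by
          rcases lt_trichotomy q u with hlt | heq | hgt
          · exfalso
            have := h5 q hq2 hlt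
            rw [hv] at this
            exact this hq.2.2
          · exfalso
            apply hcd
            rw [← hq.2.2, heq, hu]
          · exact hgt
        exact ⟨u, mem_lineF.2 ⟨by omega, h2, hu⟩, h3, hqu⟩
      obtain ⟨t, ht1, ht2, htP⟩ := enum_surj hvS
      by_cases hcafter : ∃ w, i w = c ∧ w ≤ n ∧ u < w
      · -- tooth `t`
        right; right
        obtain ⟨w0, hw0⟩ := hcafter
        have hw0Lc : w0 ∈ lineF n i c := mem_lineF.2 ⟨by omega, hw0.2.1, hw0.1⟩
        have hvmax : v < (lineF n i c).max' hLc :=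
          lt_of_lt_of_le (lt_trans h3 hw0.2.2) ((lineF n i c).le_max' _ hw0Lc)
        have htr : t < r := by
          rcases eq_or_lt_of_le ht2 with h | h
          · rw [h] at htP
            rw [htP] at hSmax
            omega
          · exact h
        refine ⟨t, ht1, by omega, Or.inr ⟨?_, htP.symm⟩⟩
        beta_reduce
        have hatLc := hPLc (t + 1) (by omega) (by omega)
        rw [mem_lineF] at hatLc
        have hgtv : v < (enum S) (t + 1) := by
          rw [← htP]
          exact enum_lt (by omega) (by omega) ht1
        have huat : u < (enum S) (t + 1) := by
          rcases lt_trichotomy ((enum S) (t + 1)) u with hlt | heq | hgt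
          · exfalso
            have := h5 _ hgtv hlt
            rw [hv] at this
            exact this hatLc.2.2
          · exfalso
            apply hcd
            rw [← hatLc.2.2, heq, hu]
          · exact hgt
        have hnod : ∀ g, u < g → g < (enum S) (t + 1) → i g ≠ d := by
          intro g hg1 hg2 hgd
          obtain ⟨z, hz1, hz2, hz3⟩ := h6 g hg1 (by omega) (by rw [hgd, hu])
          rw [hv] at hz3
          exact hNoMix t ht1 (by omega) g hgd (by omega) (by omega)
            (by omega) hg2 z hz3 (by omega) hz2
        have hueq : lastD n i d ((enum S) (t + 1)) = u := by
          have hsp := lastD_spec (n := n) (i := i) hu (by omega : 1 ≤ u) h2 huat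
          rcases lt_trichotomy (lastD n i d ((enum S) (t + 1))) u with hlt | heq | hgt
          · omega
          · exact heq
          · exact absurd hsp.1 (hnod _ hgt hsp.2.2.1)
        exact hueq.symm
      · -- final barb
        right; left
        push_neg at hcafter
        have hvmax : v = (lineF n i c).max' hLc := by
          refine le_antisymm ((lineF n i c).le_max' _ hvLc)
            (Finset.max'_le _ _ _ ?_)
          intro q hq
          rw [mem_lineF] at hq
          have hqu := hcafter q hq.2.2 hq.2.1
          rcases lt_trichotomy q u with hlt | heq | hgt
          · by_contra hh
            push_neg at hh
            have := h5 q hh hlt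
            rw [hv] at this
            exact this hq.2.2
          · exfalso
            apply hcd
            rw [← hq.2.2, heq, hu]
          · omega
        constructor
        · have hcnd : ∃ e, i e = d ∧ 1 ≤ e ∧ e ≤ n ∧ (lineF n i c).max' hLc < e :=
            ⟨u, hu, by omega, h2, by omega⟩
          rw [if_pos hcnd]
          have hsp := lastD_spec (n := n) (i := i) hu (by omega : 1 ≤ u) h2
            (by omega : u < n + 1)
          have hueq : lastD n i d (n + 1) = u := by
            rcases lt_trichotomy (lastD n i d (n + 1)) u with hlt | heq | hgt
            · omega
            · exact heq
            · exfalso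
              obtain ⟨z, hz1, hz2, hz3⟩ := h6 _ hgt hsp.2.2.2.2
                (by rw [hsp.1, hu])
              rw [hv] at hz3
              exact absurd hz1 (not_lt.2 (hcafter z hz3 (by omega)))
          rw [hueq]
        · rw [hSmax]
          exact hvmax

end Aux

/-- For every `w ∈ W` and every reduced word `w̄` of `w`, the quiver
`Γ_{w̄}` (with vertex set `{1, …, ℓ(w)}`) has a saw teeth structure: for every ordered pair
of colors `(c, d)`, its `(c, d)` bicolor subquiver has a saw teeth structure. -/
theorem gamma_hasSawTeeth
    {W : Type*} [Group W] (A : I → I → ℤ) (hA : IsSimplyLacedGCM A)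
    (M : CoxeterMatrix I) (hM : CoxeterMatrixOfGCM A M) (cs : CoxeterSystem M W)
    (w : W) (n : ℕ) (i : ℕ → I)
    (hlen : cs.length w = n) (hword : cs.wordProd (posWord i n) = w) :
    ∀ c d : I, HasSawTeeth (Set.Icc 1 n) (gammaArr n A i) i c d := by
  intro c d
  by_cases hLc : (lineF n i c).Nonempty
  · by_cases hAcd : A c d = -1
    · exact main_sawteeth A hA hAcd hLc
    · exact trivial_sawteeth A hA hAcd hLc
  · exact empty_sawteeth A hLc

end PaperStmt
end

section
/- Let ẋ=[l_r,…,l_1] be any reduced word of w_0, let 1≤k≤ℓ(w), and let q_1 be the smallest position of the leftmost representative of u_k in ẋ. Then for every 1≤m<q_1: ξ_m^{ẋ}(k) = σ_{l_1}⋯σ_{l_m}(ϖ_{i_k}); moreover ξ_{m−1}^{ẋ}(k) − ξ_m^{ẋ}(k) = β_m^{ẋ} if l_m=i_k, and ξ_{m−1}^{ẋ}(k) = ξ_m^{ẋ}(k) otherwise. -/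
/-!
Formalization of a statement from "Cluster structures on strata of flag varieties"
(algorithmic seeds for `C_{v,w}`), following the paper's combinatorial conventions.
Words `w̄ = [i_n, …, i_1]` are encoded by a letter function `i : ℕ → I` on positions
`1, …, n` (position 1 is the rightmost letter), and the represented group element is
`s_{i_n} ⋯ s_{i_1} = cs.wordProd (posWord i n)`.
-/

open scoped Classical

namespace PaperStmt

variable {I : Type*}

variable {W : Type*} [Group W] {M : CoxeterMatrix I}

/-- `p` enumerates (in increasing order) the positions `p 1 < ⋯ < p L ≤ n` of a subword of
`[i_n, …, i_1]` that is a reduced word of `v` (so `L = ℓ(v)`). -/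
def IsRepWord (cs : CoxeterSystem M W) (i : ℕ → I) (v : W) (L n : ℕ) (p : ℕ → ℕ) : Prop :=
  cs.length v = L ∧
  StrictMonoOn p (Set.Icc 1 L) ∧
  (∀ m, 1 ≤ m → m ≤ L → 1 ≤ p m ∧ p m ≤ n) ∧
  cs.wordProd (posWord (fun m => i (p m)) L) = v

/-- Lexicographic comparison of two increasing position sequences of length `L`. -/
def LexLE (L : ℕ) (p q : ℕ → ℕ) : Prop :=
  (∀ m, 1 ≤ m → m ≤ L → p m = q m) ∨
  ∃ m, 1 ≤ m ∧ m ≤ L ∧ p m < q m ∧ ∀ m', 1 ≤ m' → m' < m → p m' = q m'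

/-- The rightmost representative: the valid position sequence that is lexicographically
smallest. -/
def IsRightmostRep (cs : CoxeterSystem M W) (i : ℕ → I) (v : W) (L n : ℕ) (p : ℕ → ℕ) :
    Prop :=
  IsRepWord cs i v L n p ∧ ∀ q, IsRepWord cs i v L n q → LexLE L p q

/-- The leftmost representative: the valid position sequence that is lexicographically
largest. -/
def IsLeftmostRep (cs : CoxeterSystem M W) (i : ℕ → I) (v : W) (L n : ℕ) (p : ℕ → ℕ) :
    Prop :=
  IsRepWord cs i v L n p ∧ ∀ q, IsRepWord cs i v L n q → LexLE L q p

/-- The simple root `α_c` in the weight lattice `ℤ^I`: its `j`-th coordinate in the basis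
of fundamental weights is `a_{jc}`. -/
def alphaRoot (A : I → I → ℤ) (c : I) : I → ℤ := fun j => A j c

/-- The action of the simple reflection `σ_c` on the weight lattice:
`σ_c (λ) = λ - λ_c • α_c`. -/
def sigmaRefl (A : I → I → ℤ) (c : I) (lam : I → ℤ) : I → ℤ :=
  fun j => lam j - lam c * A j c

/-- `sigmaUpTo A l m = σ_{l 1} ∘ ⋯ ∘ σ_{l m}`. -/
def sigmaUpTo (A : I → I → ℤ) (l : ℕ → I) : ℕ → (I → ℤ) → (I → ℤ)
  | 0 => id
  | m + 1 => fun v => sigmaUpTo A l m (sigmaRefl A (l (m + 1)) v)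

/-- `sigmaDownTo A l m = σ_{l m} ∘ ⋯ ∘ σ_{l 1}`. -/
def sigmaDownTo (A : I → I → ℤ) (l : ℕ → I) : ℕ → (I → ℤ) → (I → ℤ)
  | 0 => id
  | m + 1 => fun v => sigmaRefl A (l (m + 1)) (sigmaDownTo A l m v)

/-- The positive root `β_m^{ẋ} = σ_{l 1} ⋯ σ_{l (m-1)} (α_{l m})`. -/
def betaVec (A : I → I → ℤ) (l : ℕ → I) (m : ℕ) : I → ℤ :=
  sigmaUpTo A l (m - 1) (alphaRoot A (l m))

/-- The reflection `s_{β_m^{ẋ}} = (σ_{l 1} ⋯ σ_{l (m-1)}) σ_{l m} (σ_{l 1} ⋯ σ_{l (m-1)})⁻¹`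
acting on the weight lattice. -/
def sBetaRefl (A : I → I → ℤ) (l : ℕ → I) (m : ℕ) (v : I → ℤ) : I → ℤ :=
  sigmaUpTo A l (m - 1) (sigmaRefl A (l m) (sigmaDownTo A l (m - 1) v))

/-- The sequence `(ξ_m)_{m≥0}`: starting from `start`, apply `s_{β_m}` at each position `m`
not in `Q` (the positions of the leftmost representative of `u_k`), and keep the value
unchanged at positions of `Q`.  This is exactly Naito–Sagaki's definition:
`ξ_{r_c} = s_{β_{r_c}} ⋯ s_{β_{r_1}} (ϖ_{i_k})` on the complementary positions `r_c`, and
`ξ_{q_d} = ξ_{r_c}` for the largest complementary position `r_c < q_d`. -/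
noncomputable def xiSeq (A : I → I → ℤ) (l : ℕ → I) (Q : Set ℕ) (start : I → ℤ) :
    ℕ → (I → ℤ)
  | 0 => start
  | m + 1 =>
    if (m + 1) ∈ Q then xiSeq A l Q start m
    else sBetaRefl A l (m + 1) (xiSeq A l Q start m)

/-- The fundamental weight `ϖ_c` as an element of `ℤ^I`. -/
noncomputable def fundWeight (c : I) : I → ℤ := fun j => if j = c then 1 else 0

/-- The set of values `q 1, …, q len` of a position sequence. -/
def repPosSet (q : ℕ → ℕ) (len : ℕ) : Set ℕ := {s | ∃ t, 1 ≤ t ∧ t ≤ len ∧ q t = s}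

lemma sigmaRefl_invol (A : I → I → ℤ) (hd : ∀ c, A c c = 2) (c : I) (v : I → ℤ) :
    sigmaRefl A c (sigmaRefl A c v) = v := by
  funext j
  simp only [sigmaRefl]
  rw [hd c]
  ring

lemma sigmaDownTo_sigmaUpTo (A : I → I → ℤ) (hd : ∀ c, A c c = 2) (l : ℕ → I)
    (m : ℕ) (v : I → ℤ) : sigmaDownTo A l m (sigmaUpTo A l m v) = v := by
  induction m generalizing v with
  | zero => rfl
  | succ m ih =>
    show sigmaRefl A (l (m + 1)) (sigmaDownTo A l m
        (sigmaUpTo A l m (sigmaRefl A (l (m + 1)) v))) = v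
    rw [ih, sigmaRefl_invol A hd]

lemma sigmaRefl_sub (A : I → I → ℤ) (c : I) (u v : I → ℤ) :
    sigmaRefl A c u - sigmaRefl A c v = sigmaRefl A c (u - v) := by
  funext j
  simp only [sigmaRefl, Pi.sub_apply]
  ring

lemma sigmaUpTo_sub (A : I → I → ℤ) (l : ℕ → I) (m : ℕ) (u v : I → ℤ) :
    sigmaUpTo A l m u - sigmaUpTo A l m v = sigmaUpTo A l m (u - v) := by
  induction m generalizing u v with
  | zero => rfl
  | succ m ih =>
    show sigmaUpTo A l m _ - sigmaUpTo A l m _ = sigmaUpTo A l m _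
    rw [ih, sigmaRefl_sub]

/-- Let `ẋ = [l_r, …, l_1]` be any reduced word of `w_0`, `1 ≤ k ≤ ℓ(w)`,
and `q 1` the smallest position of the leftmost representative of `u_k` in `ẋ`.  Then for
every `1 ≤ m < q 1`: `ξ_m^{ẋ}(k) = σ_{l_1} ⋯ σ_{l_m} (ϖ_{i_k})`; moreover
`ξ_{m-1}^{ẋ}(k) - ξ_m^{ẋ}(k) = β_m^{ẋ}` if `l m = i k`, and
`ξ_{m-1}^{ẋ}(k) = ξ_m^{ẋ}(k)` otherwise. -/
theorem xi_below_first_leftmost_pos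
    (A : I → I → ℤ) (hA : IsSimplyLacedGCM A)
    (hM : CoxeterMatrixOfGCM A M) (cs : CoxeterSystem M W)
    (w0 : W) (r : ℕ) (hr : cs.length w0 = r)
    (hlong : ∀ u : W, cs.length u ≤ r)
    (i : ℕ → I) (hwdot : cs.wordProd (posWord i r) = w0)
    (nw : ℕ) (hnw : nw ≤ r)
    (w : W) (hw : cs.wordProd (posWord i nw) = w) (hwred : cs.length w = nw)
    (l : ℕ → I) (hx : cs.wordProd (posWord l r) = w0)
    (k : ℕ) (hk1 : 1 ≤ k) (hk2 : k ≤ nw)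
    (q : ℕ → ℕ)
    (hq : IsLeftmostRep cs l
      (cs.wordProd (posWord (fun t => i (t + k)) (r - k))) (r - k) r q) :
    ∀ m, 1 ≤ m → m < q 1 →
      xiSeq A l (repPosSet q (r - k)) (fundWeight (i k)) m
        = sigmaUpTo A l m (fundWeight (i k)) ∧
      (l m = i k →
        xiSeq A l (repPosSet q (r - k)) (fundWeight (i k)) (m - 1)
          - xiSeq A l (repPosSet q (r - k)) (fundWeight (i k)) m = betaVec A l m) ∧
      (l m ≠ i k →
        xiSeq A l (repPosSet q (r - k)) (fundWeight (i k)) (m - 1)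
          = xiSeq A l (repPosSet q (r - k)) (fundWeight (i k)) m) := by
  set Q := repPosSet q (r - k) with hQ
  set start := fundWeight (i k) with hstart
  have hsm : StrictMonoOn q (Set.Icc 1 (r - k)) := hq.1.2.1
  -- positions below q 1 are not in Q
  have hnotQ : ∀ m, m < q 1 → m ∉ Q := by
    intro m hm hmem
    obtain ⟨t, ht1, ht2, hqt⟩ := hmem
    have h1 : (1 : ℕ) ∈ Set.Icc 1 (r - k) := ⟨le_refl 1, le_trans ht1 ht2⟩
    have ht : t ∈ Set.Icc 1 (r - k) := ⟨ht1, ht2⟩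
    have : q 1 ≤ q t := hsm.monotoneOn h1 ht ht1
    omega
  have hd : ∀ c, A c c = 2 := hA.diag
  -- the key identity below q 1
  have key : ∀ m, m < q 1 → xiSeq A l Q start m = sigmaUpTo A l m start := by
    intro m
    induction m with
    | zero => intro _; rfl
    | succ m ih =>
      intro hm
      have hm' : m < q 1 := by omega
      have hnot : (m + 1) ∉ Q := hnotQ _ hm
      have : xiSeq A l Q start (m + 1) = sBetaRefl A l (m + 1) (xiSeq A l Q start m) := by
        show (if (m + 1) ∈ Q then xiSeq A l Q start m
          else sBetaRefl A l (m + 1) (xiSeq A l Q start m)) = _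
        rw [if_neg hnot]
      rw [this, ih hm']
      show sigmaUpTo A l m (sigmaRefl A (l (m + 1))
          (sigmaDownTo A l m (sigmaUpTo A l m start))) = _
      rw [sigmaDownTo_sigmaUpTo A hd]
      rfl
  intro m hm1 hmq
  obtain ⟨m', rfl⟩ : ∃ m', m = m' + 1 := ⟨m - 1, by omega⟩
  have hxm : xiSeq A l Q start (m' + 1) = sigmaUpTo A l (m' + 1) start := key _ hmq
  have hxm' : xiSeq A l Q start m' = sigmaUpTo A l m' start := key _ (by omega)
  have hsub : m' + 1 - 1 = m' := by omega
  refine ⟨hxm, ?_, ?_⟩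
  · intro hlm
    rw [hsub, hxm, hxm']
    show sigmaUpTo A l m' start - sigmaUpTo A l m' (sigmaRefl A (l (m' + 1)) start)
      = betaVec A l (m' + 1)
    rw [sigmaUpTo_sub]
    have : start - sigmaRefl A (l (m' + 1)) start = alphaRoot A (l (m' + 1)) := by
      funext j
      simp only [Pi.sub_apply, sigmaRefl, alphaRoot, hstart, fundWeight, hlm,
        if_pos rfl, eq_self_iff_true, if_true]
      ring
    rw [this]
    show sigmaUpTo A l m' (alphaRoot A (l (m' + 1))) = sigmaUpTo A l ((m' + 1) - 1) _
    rw [hsub]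
  · intro hlm
    rw [hsub, hxm, hxm']
    show sigmaUpTo A l m' start = sigmaUpTo A l m' (sigmaRefl A (l (m' + 1)) start)
    have hfix : sigmaRefl A (l (m' + 1)) start = start := by
      funext j
      simp only [sigmaRefl, hstart, fundWeight, if_neg hlm]
      ring
    rw [hfix]

end PaperStmt
end

section
/- For every 0≤m≤ℓ(v) and every 1≤k≤ℓ(w) with k^{α(k,m)+} ≤ ℓ(w): the set {1≤j≤ℓ(v) : f_min(k)^{α(k,m)⊕} ≤ j ≤ f(k^{α(k,m)+}) and i_{p_j}=i_k} is empty if and only if k^{α(k,m)+} < ξ(k,m). -/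
/-!
Formalization of a statement from "Cluster structures on strata of flag varieties"
(algorithmic seeds for `C_{v,w}`), following the paper's combinatorial conventions.
Words `w̄ = [i_n, …, i_1]` are encoded by a letter function `i : ℕ → I` on positions
`1, …, n` (position 1 is the rightmost letter), and the represented group element is
`s_{i_n} ⋯ s_{i_1} = cs.wordProd (posWord i n)`.
-/

open scoped Classical

namespace PaperStmt

variable {I : Type*}

variable {W : Type*} [Group W] {M : CoxeterMatrix I}

/-- `f_min(k)`: the smallest `1 ≤ j ≤ L` with `i (p j) = i k` (and `0` if there is none,
since `sInf ∅ = 0`). -/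
noncomputable def fminDef (i : ℕ → I) (p : ℕ → ℕ) (L : ℕ) (k : ℕ) : ℕ :=
  sInf {j | 1 ≤ j ∧ j ≤ L ∧ i (p j) = i k}

/-- `f(k)`: the largest `1 ≤ j ≤ L` with `p j ≤ k` and `i (p j) = i k` (and `0` if there is
none, since `sSup ∅ = 0`). -/
noncomputable def fDef (i : ℕ → I) (p : ℕ → ℕ) (L : ℕ) (k : ℕ) : ℕ :=
  sSup {j | 1 ≤ j ∧ j ≤ L ∧ p j ≤ k ∧ i (p j) = i k}

/-- `m^⊕`: the smallest `1 ≤ j ≤ L` with `p j > p m` and `i (p j) = i (p m)`,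
and `L + 1` if there is none. -/
noncomputable def oplus (i : ℕ → I) (p : ℕ → ℕ) (L : ℕ) (m : ℕ) : ℕ :=
  if {j | 1 ≤ j ∧ j ≤ L ∧ p m < p j ∧ i (p j) = i (p m)}.Nonempty then
    sInf {j | 1 ≤ j ∧ j ≤ L ∧ p m < p j ∧ i (p j) = i (p m)}
  else L + 1

/-- `α(k, m) = #{1 ≤ j ≤ m : i (p j) = i k}`. -/
noncomputable def alphaCount (i : ℕ → I) (p : ℕ → ℕ) (k m : ℕ) : ℕ :=
  ((Finset.Icc 1 m).filter fun j => i (p j) = i k).card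

/-- `ξ(k, m)`: the smallest position `j` of `w̄` with `p m < j ≤ n` that is a position of
the rightmost representative of `v` and has color `i k`; `n + 1` if there is none. -/
noncomputable def xiBound (i : ℕ → I) (p : ℕ → ℕ) (L n : ℕ) (k m : ℕ) : ℕ :=
  if {j | p m < j ∧ j ≤ n ∧ (∃ t, 1 ≤ t ∧ t ≤ L ∧ p t = j) ∧ i j = i k}.Nonempty then
    sInf {j | p m < j ∧ j ≤ n ∧ (∃ t, 1 ≤ t ∧ t ≤ L ∧ p t = j) ∧ i j = i k}
  else n + 1

/-- If `succPos n i x ≤ n`, then it is a genuine later position of the same color. -/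
lemma succPos_lt_color {n : ℕ} {i : ℕ → I} {x : ℕ} (h : succPos n i x ≤ n) :
    x < succPos n i x ∧ i (succPos n i x) = i x := by
  unfold succPos at h ⊢
  split_ifs at h ⊢ with hne
  · have hm := Nat.sInf_mem hne
    exact ⟨hm.1, hm.2.2⟩
  · omega

/-- Iterates of `succPos` preserve the color as long as they stay `≤ n`. -/
lemma succPos_iter_color {n : ℕ} {i : ℕ → I} {k : ℕ} :
    ∀ a, (succPos n i)^[a] k ≤ n → i ((succPos n i)^[a] k) = i k := by
  intro a
  induction a with
  | zero => intro _; rfl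
  | succ a ih =>
    intro h
    rw [Function.iterate_succ_apply'] at h ⊢
    obtain ⟨hlt, hcol⟩ := succPos_lt_color h
    have hle : (succPos n i)^[a] k ≤ n := by omega
    rw [hcol, ih hle]

/-- For every `0 ≤ m ≤ ℓ(v)` and every `1 ≤ k ≤ ℓ(w)` with
`k^{α(k,m)+} ≤ ℓ(w)`: the set
`{1 ≤ j ≤ ℓ(v) : f_min(k)^{α(k,m)⊕} ≤ j ≤ f(k^{α(k,m)+}) and i (p j) = i k}` is empty if
and only if `k^{α(k,m)+} < ξ(k, m)`. -/
theorem empty_coordinate_set_iff_lt_xiBound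
    (A : I → I → ℤ) (hA : IsSimplyLacedGCM A)
    (hM : CoxeterMatrixOfGCM A M) (cs : CoxeterSystem M W)
    (w : W) (n : ℕ) (i : ℕ → I)
    (hlen : cs.length w = n) (hword : cs.wordProd (posWord i n) = w)
    (v : W) (L : ℕ) (hL : cs.length v = L)
    (p : ℕ → ℕ) (hp0 : p 0 = 0) (hp : IsRightmostRep cs i v L n p)
    (m k : ℕ) (hmL : m ≤ L) (hk1 : 1 ≤ k) (hkn : k ≤ n)
    (hsucc : (succPos n i)^[alphaCount i p k m] k ≤ n) :
    {j | 1 ≤ j ∧ j ≤ L ∧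
        (oplus i p L)^[alphaCount i p k m] (fminDef i p L k) ≤ j ∧
        j ≤ fDef i p L ((succPos n i)^[alphaCount i p k m] k) ∧
        i (p j) = i k} = ∅
      ↔ (succPos n i)^[alphaCount i p k m] k < xiBound i p L n k m := by
  obtain ⟨⟨hlv, hmono, hbound, hpw⟩, -⟩ := hp
  set a := alphaCount i p k m with ha
  set K := (succPos n i)^[a] k with hKdef
  have hKcol : i K = i k := succPos_iter_color a hsucc
  -- basic facts about positions
  have pmlt : ∀ s t : ℕ, 1 ≤ s → s ≤ L → 1 ≤ t → t ≤ L → (p s < p t ↔ s < t) := by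
    intro s t hs1 hsL ht1 htL
    exact hmono.lt_iff_lt ⟨hs1, hsL⟩ ⟨ht1, htL⟩
  have acard : ∀ t : ℕ, alphaCount i p k t
      = ((Finset.Icc 1 t).filter fun s => i (p s) = i k).card := fun _ => rfl
  -- monotonicity of alphaCount
  have amono : ∀ s t : ℕ, s ≤ t → alphaCount i p k s ≤ alphaCount i p k t := by
    intro s t hst
    rw [acard, acard]
    exact Finset.card_le_card
      (Finset.filter_subset_filter _ (Finset.Icc_subset_Icc le_rfl hst))
  -- characterization of `m < j` via alphaCount, for j of color i k
  have hchar : ∀ j, 1 ≤ j → j ≤ L → i (p j) = i k →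
      (m < j ↔ a + 1 ≤ alphaCount i p k j) := by
    intro j hj1 hjL hcol
    constructor
    · intro hmlt
      have hsub : (Finset.Icc 1 m).filter (fun t => i (p t) = i k) ⊆
          (Finset.Icc 1 j).filter (fun t => i (p t) = i k) :=
        Finset.filter_subset_filter _ (Finset.Icc_subset_Icc le_rfl (le_of_lt hmlt))
      have hjmem : j ∈ (Finset.Icc 1 j).filter (fun t => i (p t) = i k) :=
        Finset.mem_filter.mpr ⟨Finset.mem_Icc.mpr ⟨hj1, le_rfl⟩, hcol⟩
      have hjnot : j ∉ (Finset.Icc 1 m).filter (fun t => i (p t) = i k) := by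
        intro hmem
        have := (Finset.mem_filter.mp hmem).1
        rw [Finset.mem_Icc] at this
        omega
      have hcard := Finset.card_lt_card
        ((Finset.ssubset_iff_of_subset hsub).mpr ⟨j, hjmem, hjnot⟩)
      rw [← acard, ← acard, ← ha] at hcard
      omega
    · intro hcardle
      by_contra hle
      push_neg at hle
      have := amono j m hle
      rw [← ha] at this
      omega
  -- existence of an element of color i k with large alphaCount, when a ≥ 1
  have hmaxel : 1 ≤ a → ∃ j, 1 ≤ j ∧ j ≤ L ∧ i (p j) = i k ∧ a ≤ alphaCount i p k j := by
    intro ha1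
    have hne : ((Finset.Icc 1 m).filter (fun t => i (p t) = i k)).Nonempty := by
      rw [← Finset.card_pos, ← acard, ← ha]
      omega
    set j := ((Finset.Icc 1 m).filter (fun t => i (p t) = i k)).max' hne with hj
    have hjmem := ((Finset.Icc 1 m).filter (fun t => i (p t) = i k)).max'_mem hne
    rw [← hj] at hjmem
    obtain ⟨hjIcc, hjcol⟩ := Finset.mem_filter.mp hjmem
    rw [Finset.mem_Icc] at hjIcc
    refine ⟨j, hjIcc.1, le_trans hjIcc.2 hmL, hjcol, ?_⟩
    have hsub : (Finset.Icc 1 m).filter (fun t => i (p t) = i k) ⊆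
        (Finset.Icc 1 j).filter (fun t => i (p t) = i k) := by
      intro x hx
      obtain ⟨hxIcc, hxcol⟩ := Finset.mem_filter.mp hx
      rw [Finset.mem_Icc] at hxIcc
      have hxj : x ≤ j := Finset.le_max' _ x hx
      exact Finset.mem_filter.mpr ⟨Finset.mem_Icc.mpr ⟨hxIcc.1, hxj⟩, hxcol⟩
    have := Finset.card_le_card hsub
    rw [← acard, ← acard, ← ha] at this
    exact this
  -- the set appearing in `oplus` at a position of color i k
  have oplus_set : ∀ t, 1 ≤ t → t ≤ L → i (p t) = i k →
      {j | 1 ≤ j ∧ j ≤ L ∧ p t < p j ∧ i (p j) = i (p t)} =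
      {j | 1 ≤ j ∧ j ≤ L ∧ t < j ∧ i (p j) = i k} := by
    intro t ht1 htL hcol
    ext j
    simp only [Set.mem_setOf_eq]
    constructor
    · rintro ⟨hj1, hjL, hlt, hc⟩
      exact ⟨hj1, hjL, (pmlt t j ht1 htL hj1 hjL).mp hlt, hc.trans hcol⟩
    · rintro ⟨hj1, hjL, hlt, hc⟩
      exact ⟨hj1, hjL, (pmlt t j ht1 htL hj1 hjL).mpr hlt, hc.trans hcol.symm⟩
  -- main induction on the number of ⊕-iterates
  have Qmain : ∀ b, b ≤ a →
      (∀ j, 1 ≤ j → j ≤ L → i (p j) = i k →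
        ((oplus i p L)^[b] (fminDef i p L k) ≤ j ↔ b + 1 ≤ alphaCount i p k j)) ∧
      (b < a → 1 ≤ (oplus i p L)^[b] (fminDef i p L k) ∧
        (oplus i p L)^[b] (fminDef i p L k) ≤ L ∧
        i (p ((oplus i p L)^[b] (fminDef i p L k))) = i k ∧
        alphaCount i p k ((oplus i p L)^[b] (fminDef i p L k)) = b + 1) := by
    intro b
    induction b with
    | zero =>
      intro _
      simp only [Function.iterate_zero_apply]
      constructor
      · intro j hj1 hjL hjcol
        constructor
        · intro _
          have hjmem : j ∈ (Finset.Icc 1 j).filter (fun t => i (p t) = i k) :=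
            Finset.mem_filter.mpr ⟨Finset.mem_Icc.mpr ⟨hj1, le_rfl⟩, hjcol⟩
          have := Finset.card_pos.mpr ⟨j, hjmem⟩
          rw [← acard] at this
          omega
        · intro _
          exact Nat.sInf_le ⟨hj1, hjL, hjcol⟩
      · intro h0a
        obtain ⟨j, hj1, hjL, hjcol, _⟩ := hmaxel (by omega)
        have hne : {t | 1 ≤ t ∧ t ≤ L ∧ i (p t) = i k}.Nonempty := ⟨j, hj1, hjL, hjcol⟩
        have hmem : fminDef i p L k ∈ {t | 1 ≤ t ∧ t ≤ L ∧ i (p t) = i k} := Nat.sInf_mem hne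
        obtain ⟨hf1, hfL, hfcol⟩ := hmem
        refine ⟨hf1, hfL, hfcol, ?_⟩
        have hsingle : (Finset.Icc 1 (fminDef i p L k)).filter (fun t => i (p t) = i k)
            = {fminDef i p L k} := by
          apply Finset.eq_singleton_iff_unique_mem.mpr
          constructor
          · exact Finset.mem_filter.mpr ⟨Finset.mem_Icc.mpr ⟨hf1, le_rfl⟩, hfcol⟩
          · intro x hx
            obtain ⟨hxIcc, hxcol⟩ := Finset.mem_filter.mp hx
            rw [Finset.mem_Icc] at hxIcc
            have hge : fminDef i p L k ≤ x :=
              Nat.sInf_le ⟨hxIcc.1, le_trans hxIcc.2 hfL, hxcol⟩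
            omega
        rw [acard, hsingle, Finset.card_singleton]
    | succ b ih =>
      intro hba
      obtain ⟨hbi, hbm⟩ := ih (by omega)
      obtain ⟨hc1, hcL, hccol, hcalpha⟩ := hbm (by omega)
      rw [Function.iterate_succ_apply']
      simp only [oplus]
      rw [oplus_set ((oplus i p L)^[b] (fminDef i p L k)) hc1 hcL hccol]
      set cb := (oplus i p L)^[b] (fminDef i p L k) with hcb
      by_cases hne : {j | 1 ≤ j ∧ j ≤ L ∧ cb < j ∧ i (p j) = i k}.Nonempty
      · rw [if_pos hne]
        set c' := sInf {j | 1 ≤ j ∧ j ≤ L ∧ cb < j ∧ i (p j) = i k} with hc'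
        have hmem := Nat.sInf_mem hne
        rw [← hc'] at hmem
        obtain ⟨h'1, h'L, hcblt, h'col⟩ := hmem
        have hF : (Finset.Icc 1 c').filter (fun t => i (p t) = i k)
            = insert c' ((Finset.Icc 1 cb).filter (fun t => i (p t) = i k)) := by
          ext x
          simp only [Finset.mem_filter, Finset.mem_Icc, Finset.mem_insert]
          constructor
          · rintro ⟨⟨hx1, hxc⟩, hxcol⟩
            by_cases hxle : x ≤ cb
            · exact Or.inr ⟨⟨hx1, hxle⟩, hxcol⟩
            · left
              have hxS : x ∈ {j | 1 ≤ j ∧ j ≤ L ∧ cb < j ∧ i (p j) = i k} :=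
                ⟨hx1, le_trans hxc h'L, by omega, hxcol⟩
              have := Nat.sInf_le hxS
              rw [← hc'] at this
              omega
          · rintro (rfl | ⟨⟨hx1, hxle⟩, hxcol⟩)
            · exact ⟨⟨h'1, le_rfl⟩, h'col⟩
            · exact ⟨⟨hx1, by omega⟩, hxcol⟩
        have hnotmem : c' ∉ (Finset.Icc 1 cb).filter (fun t => i (p t) = i k) := by
          intro hx
          have := (Finset.mem_filter.mp hx).1
          rw [Finset.mem_Icc] at this
          omega
        have halpha' : alphaCount i p k c' = b + 2 := by
          rw [acard, hF, Finset.card_insert_of_notMem hnotmem, ← acard, hcalpha]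
        constructor
        · intro j hj1 hjL hjcol
          constructor
          · intro hle
            have := amono c' j hle
            omega
          · intro hge
            have hjcb : cb < j := by
              by_contra hle
              push_neg at hle
              have := amono j cb hle
              omega
            exact Nat.sInf_le ⟨hj1, hjL, hjcb, hjcol⟩
        · intro _
          exact ⟨h'1, h'L, h'col, halpha'⟩
      · rw [if_neg hne]
        have hforall : ∀ j, 1 ≤ j → j ≤ L → i (p j) = i k →
            alphaCount i p k j ≤ b + 1 := by
          intro j hj1 hjL hjcol
          have hjcb : ¬ cb < j := fun hlt => hne ⟨j, hj1, hjL, hlt, hjcol⟩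
          push_neg at hjcb
          have := amono j cb hjcb
          omega
        constructor
        · intro j hj1 hjL hjcol
          constructor
          · intro h
            omega
          · intro h
            have := hforall j hj1 hjL hjcol
            omega
        · intro hlt
          exfalso
          obtain ⟨j, hj1, hjL, hjcol, hja⟩ := hmaxel (by omega)
          have := hforall j hj1 hjL hjcol
          omega
  have bicond := (Qmain a le_rfl).1
  -- characterization of `j ≤ fDef i p L K`
  have hfd : fDef i p L K = sSup {t | 1 ≤ t ∧ t ≤ L ∧ p t ≤ K ∧ i (p t) = i K} := rfl
  have hFbdd : BddAbove {t | 1 ≤ t ∧ t ≤ L ∧ p t ≤ K ∧ i (p t) = i K} :=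
    ⟨L, fun x hx => hx.2.1⟩
  have fiff : ∀ j, 1 ≤ j → j ≤ L → i (p j) = i k →
      (j ≤ fDef i p L K ↔ p j ≤ K) := by
    intro j hj1 hjL hjcol
    constructor
    · intro hle
      by_cases hne : {t | 1 ≤ t ∧ t ≤ L ∧ p t ≤ K ∧ i (p t) = i K}.Nonempty
      · have hmem := Nat.sSup_mem hne hFbdd
        obtain ⟨hf1, hfL, hfK, hfcol⟩ := hmem
        rw [hfd] at hle
        rcases lt_or_eq_of_le hle with h | h
        · have := (pmlt j _ hj1 hjL hf1 hfL).mpr h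
          omega
        · rw [h]
          exact hfK
      · rw [Set.not_nonempty_iff_eq_empty] at hne
        rw [hfd, hne, csSup_empty] at hle
        simp only [Nat.bot_eq_zero, Nat.le_zero] at hle
        omega
    · intro hpj
      rw [hfd]
      exact le_csSup hFbdd ⟨hj1, hjL, hpj, hjcol.trans hKcol.symm⟩
  -- characterization of `xiBound ≤ K`
  have xiiff : xiBound i p L n k m ≤ K ↔
      ∃ j, 1 ≤ j ∧ j ≤ L ∧ m < j ∧ p j ≤ K ∧ i (p j) = i k := by
    unfold xiBound
    by_cases hne : {x | p m < x ∧ x ≤ n ∧ (∃ t, 1 ≤ t ∧ t ≤ L ∧ p t = x) ∧ i x = i k}.Nonempty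
    · rw [if_pos hne]
      constructor
      · intro hle
        obtain ⟨hpm, hxn, ⟨t, ht1, htL, hpt⟩, hcol⟩ := Nat.sInf_mem hne
        refine ⟨t, ht1, htL, ?_, by rw [hpt]; exact hle, by rw [hpt]; exact hcol⟩
        rcases Nat.eq_zero_or_pos m with rfl | hm1
        · omega
        · have hlt : p m < p t := by rw [hpt]; exact hpm
          exact (pmlt m t hm1 hmL ht1 htL).mp hlt
      · rintro ⟨j, hj1, hjL, hmj, hpjK, hcol⟩
        refine le_trans (Nat.sInf_le ⟨?_, (hbound j hj1 hjL).2, ⟨j, hj1, hjL, rfl⟩, hcol⟩) hpjK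
        rcases Nat.eq_zero_or_pos m with rfl | hm1
        · rw [hp0]
          exact (hbound j hj1 hjL).1
        · exact (pmlt m j hm1 hmL hj1 hjL).mpr hmj
    · rw [if_neg hne]
      constructor
      · intro h
        exact absurd (h.trans hsucc) (by omega)
      · rintro ⟨j, hj1, hjL, hmj, hpjK, hcol⟩
        exfalso
        refine hne ⟨p j, ?_, (hbound j hj1 hjL).2, ⟨j, hj1, hjL, rfl⟩, hcol⟩
        rcases Nat.eq_zero_or_pos m with rfl | hm1
        · rw [hp0]
          exact (hbound j hj1 hjL).1
        · exact (pmlt m j hm1 hmL hj1 hjL).mpr hmj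
  -- final assembly
  rw [Set.eq_empty_iff_forall_notMem]
  constructor
  · intro hemp
    rw [← not_le]
    intro hle
    obtain ⟨j, hj1, hjL, hmj, hpjK, hcol⟩ := xiiff.mp hle
    exact hemp j ⟨hj1, hjL, (bicond j hj1 hjL hcol).mpr ((hchar j hj1 hjL hcol).mp hmj),
      (fiff j hj1 hjL hcol).mpr hpjK, hcol⟩
  · intro hlt j hj
    obtain ⟨hj1, hjL, hg, hF, hcol⟩ := hj
    have h1 : m < j := (hchar j hj1 hjL hcol).mpr ((bicond j hj1 hjL hcol).mp hg)
    have h2 : p j ≤ K := (fiff j hj1 hjL hcol).mp hF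
    exact absurd (xiiff.mpr ⟨j, hj1, hjL, h1, h2, hcol⟩) (not_le.mpr hlt)

end PaperStmt
end
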